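/- Let n ≥ 1, δ > 0, let A : ℝ^n → Sym_n(ℝ) with A(y) positive semidefinite for every y, and let H : ℝ^n × ℝ^n → ℝ satisfy α|q|² − α' ≤ H(q, y) ≤ β|q|² + β' for all (q, y), where α, β > 0 and α', β' ≥ 0. Fix p ∈ ℝ^n. If w : ℝ^n → ℝ is a C², ℤ^n-periodic function satisfying −tr(A(y) D²w(y)) + H(∇w(y) + p, y) + δ w(y) = 0 for all y ∈ ℝ^n, then −β|p|² − β' ≤ δ w(y) ≤ −α|p|² + α' for all y ∈ ℝ^n. -/

import Mathlib

open scoped InnerProductSpace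

/-- The Hessian matrix of `w : ℝⁿ → ℝ` at `y`, with entries the iterated directional
derivatives along the standard basis vectors. -/
noncomputable def hessM {n : ℕ} (w : EuclideanSpace ℝ (Fin n) → ℝ)
    (y : EuclideanSpace ℝ (Fin n)) : Matrix (Fin n) (Fin n) ℝ :=
  fun i j =>
    fderiv ℝ (fun z => fderiv ℝ w z (EuclideanSpace.single j 1)) y (EuclideanSpace.single i 1)

/-- An integer vector `k ∈ ℤⁿ` viewed as an element of `ℝⁿ`. -/
noncomputable def intVec {n : ℕ} (k : Fin n → ℤ) : EuclideanSpace ℝ (Fin n) :=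
  (WithLp.equiv 2 (Fin n → ℝ)).symm (fun i => (k i : ℝ))

/-- A function on `ℝⁿ` is `ℤⁿ`-periodic. -/
def ZPeriodic {n : ℕ} (f : EuclideanSpace ℝ (Fin n) → ℝ) : Prop :=
  ∀ (y : EuclideanSpace ℝ (Fin n)) (k : Fin n → ℤ), f (y + intVec k) = f y


/-! The maximum principle. A continuous `ℤⁿ`-periodic `w` attains its maximum at some `y₀`,
where `∇w(y₀) = 0` and `D²w(y₀) ≤ 0`; since `A(y₀) ⪰ 0`, also `tr(A(y₀) D²w(y₀)) ≤ 0`. The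
equation then gives `δ w ≤ δ w(y₀) ≤ -H(p, y₀) ≤ -α|p|² + α'`. The lower bound is the same
argument at a minimum point, using the upper growth bound on `H`. -/

open Filter Topology
open scoped Matrix MatrixOrder

theorem IsLocalMax.deriv_deriv_nonpos {f : ℝ → ℝ} {a : ℝ} (hf : IsLocalMax f a)
    (hc : ContinuousAt f a) : deriv (deriv f) a ≤ 0 := by
  by_contra! hpos
  -- the second derivative test would make `a` a local minimum as well, so `f` is locally constant
  have hmin : IsLocalMin f a := isLocalMin_of_deriv_deriv_pos hpos hf.deriv_eq_zero hc
  have hconst : f =ᶠ[𝓝 a] fun _ => f a := by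
    filter_upwards [hmin, hf] with x h₁ h₂ using le_antisymm h₂ h₁
  have hderiv : deriv f =ᶠ[𝓝 a] fun _ => 0 := by
    filter_upwards [hconst.eventuallyEq_nhds] with x hx
    rw [hx.deriv_eq, deriv_const]
  rw [hderiv.deriv_eq, deriv_const] at hpos
  exact lt_irrefl _ hpos

section SecondDerivative

variable {E F : Type*} [NormedAddCommGroup E] [NormedSpace ℝ E]
  [NormedAddCommGroup F] [NormedSpace ℝ F]

theorem hasFDerivAt_fderiv_apply {f : E → F} {x : E} (h : DifferentiableAt ℝ (fderiv ℝ f) x)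
    (v : E) : HasFDerivAt (fun z => fderiv ℝ f z v) ((fderiv ℝ (fderiv ℝ f) x).flip v) x :=
  (ContinuousLinearMap.apply ℝ F v).hasFDerivAt.comp x h.hasFDerivAt

theorem IsLocalMax.fderiv_fderiv_apply_self_nonpos {f : E → ℝ} {x₀ : E} (hf : IsLocalMax f x₀)
    (hd : Differentiable ℝ f) (hd₂ : DifferentiableAt ℝ (fderiv ℝ f) x₀) (v : E) :
    fderiv ℝ (fderiv ℝ f) x₀ v v ≤ 0 := by
  have hline : ∀ t : ℝ, HasDerivAt (fun s : ℝ => x₀ + s • v) v t := fun t => by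
    simpa using ((hasDerivAt_id t).smul_const v).const_add x₀
  have hmax : IsLocalMax (fun t : ℝ => f (x₀ + t • v)) 0 :=
    IsLocalMax.comp_continuous (by simpa using hf) (hline 0).continuousAt
  have hderiv : deriv (fun t : ℝ => f (x₀ + t • v)) = fun t => fderiv ℝ f (x₀ + t • v) v :=
    funext fun t => ((hd _).hasFDerivAt.comp_hasDerivAt t (hline t)).deriv
  have hderiv₂ :
      deriv (fun t : ℝ => fderiv ℝ f (x₀ + t • v) v) 0 = fderiv ℝ (fderiv ℝ f) x₀ v v := by
    have := (hasFDerivAt_fderiv_apply (by simpa using hd₂) v).comp_hasDerivAt (0 : ℝ) (hline 0)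
    simpa [Function.comp_def] using this.deriv
  rw [← hderiv₂, ← hderiv]
  exact hmax.deriv_deriv_nonpos ((hd _).continuousAt.comp (hline 0).continuousAt)

theorem IsLocalMin.fderiv_fderiv_apply_self_nonneg {f : E → ℝ} {x₀ : E} (hf : IsLocalMin f x₀)
    (hd : Differentiable ℝ f) (hd₂ : DifferentiableAt ℝ (fderiv ℝ f) x₀) (v : E) :
    0 ≤ fderiv ℝ (fderiv ℝ f) x₀ v v := by
  have hneg : fderiv ℝ (fun y => -f y) = fun y => -fderiv ℝ f y := funext fun _ => fderiv_neg
  have := hf.neg.fderiv_fderiv_apply_self_nonpos hd.neg (by rw [hneg]; exact hd₂.neg) v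
  simpa [hneg] using this

end SecondDerivative

theorem Matrix.PosSemidef.trace_mul_nonneg {ι : Type*} [Fintype ι] {A M : Matrix ι ι ℝ}
    (hA : A.PosSemidef) (hM : ∀ x, 0 ≤ x ⬝ᵥ M *ᵥ x) : 0 ≤ (A * M).trace := by
  classical
  obtain ⟨C, rfl⟩ := CStarAlgebra.nonneg_iff_eq_star_mul_self.mp hA.nonneg
  rw [Matrix.mul_assoc, Matrix.trace_mul_comm, Matrix.trace]
  exact Finset.sum_nonneg fun k _ => by
    simpa [Matrix.mul_mul_apply, Matrix.star_eq_conjTranspose] using hM (C k)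

theorem Matrix.PosSemidef.trace_mul_nonpos {ι : Type*} [Fintype ι] {A M : Matrix ι ι ℝ}
    (hA : A.PosSemidef) (hM : ∀ x, x ⬝ᵥ M *ᵥ x ≤ 0) : (A * M).trace ≤ 0 := by
  simpa using hA.trace_mul_nonneg (M := -M) fun x => by simpa [Matrix.neg_mulVec] using hM x

theorem IsLocalExtr.gradient_eq_zero {F : Type*} [NormedAddCommGroup F] [InnerProductSpace ℝ F]
    [CompleteSpace F] {f : F → ℝ} {x : F} (h : IsLocalExtr f x) : gradient f x = 0 := by
  simp [gradient, h.fderiv_eq_zero]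

section Hessian

variable {n : ℕ} {w : EuclideanSpace ℝ (Fin n) → ℝ} {y : EuclideanSpace ℝ (Fin n)}

theorem hessM_apply (h : DifferentiableAt ℝ (fderiv ℝ w) y) (i j : Fin n) :
    hessM w y i j =
      fderiv ℝ (fderiv ℝ w) y (EuclideanSpace.single i 1) (EuclideanSpace.single j 1) := by
  simp [hessM, (hasFDerivAt_fderiv_apply h _).fderiv]

theorem dotProduct_hessM_mulVec (h : DifferentiableAt ℝ (fderiv ℝ w) y) (x : Fin n → ℝ) :
    x ⬝ᵥ hessM w y *ᵥ x = fderiv ℝ (fderiv ℝ w) y (WithLp.toLp 2 x) (WithLp.toLp 2 x) := by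
  have hx : WithLp.toLp 2 x = ∑ i, x i • EuclideanSpace.single i (1 : ℝ) := by
    ext j; simp [Pi.single_apply]
  rw [hx]
  simp only [dotProduct, Matrix.mulVec, hessM_apply h, mul_comm, Finset.mul_sum, map_sum, map_smul,
    sum_apply, smul_apply, smul_eq_mul]
  exact Finset.sum_comm.trans (by simp only [mul_left_comm])

theorem IsLocalMax.trace_mul_hessM_nonpos {A : Matrix (Fin n) (Fin n) ℝ} (hmax : IsLocalMax w y)
    (hA : A.PosSemidef) (hw : ContDiff ℝ 2 w) : (A * hessM w y).trace ≤ 0 := by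
  have hd₂ := (hw.fderiv_right le_rfl).differentiable one_ne_zero y
  refine hA.trace_mul_nonpos fun x => ?_
  rw [dotProduct_hessM_mulVec hd₂]
  exact hmax.fderiv_fderiv_apply_self_nonpos (hw.differentiable two_ne_zero) hd₂ _

theorem IsLocalMin.trace_mul_hessM_nonneg {A : Matrix (Fin n) (Fin n) ℝ} (hmin : IsLocalMin w y)
    (hA : A.PosSemidef) (hw : ContDiff ℝ 2 w) : 0 ≤ (A * hessM w y).trace := by
  have hd₂ := (hw.fderiv_right le_rfl).differentiable one_ne_zero y
  refine hA.trace_mul_nonneg fun x => ?_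
  rw [dotProduct_hessM_mulVec hd₂]
  exact hmin.fderiv_fderiv_apply_self_nonneg (hw.differentiable two_ne_zero) hd₂ _

end Hessian

namespace ZPeriodic

variable {n : ℕ} {w : EuclideanSpace ℝ (Fin n) → ℝ}

theorem isCompact_range (hw : ZPeriodic w) (hc : Continuous w) : IsCompact (Set.range w) := by
  -- every value of `w` is taken on the unit cube, at the fractional part of the argument
  have hK : IsCompact (WithLp.toLp 2 '' Set.Icc (0 : Fin n → ℝ) 1) :=
    isCompact_Icc.image (PiLp.continuous_toLp 2 _)
  convert hK.image hc
  refine (Set.image_subset_range _ _).antisymm' ?_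
  rintro _ ⟨y, rfl⟩
  refine ⟨WithLp.toLp 2 fun i => Int.fract (y i),
    ⟨_, ⟨fun i => Int.fract_nonneg _, fun i => (Int.fract_lt_one _).le⟩, rfl⟩, ?_⟩
  rw [← hw _ fun i => ⌊y i⌋]
  congr 1
  ext i
  simp [intVec]

theorem exists_forall_ge (hw : ZPeriodic w) (hc : Continuous w) : ∃ y₀, ∀ y, w y ≤ w y₀ := by
  obtain ⟨_, ⟨y₀, rfl⟩, hy₀⟩ := (hw.isCompact_range hc).exists_isGreatest (Set.range_nonempty w)
  exact ⟨y₀, fun y => hy₀ ⟨y, rfl⟩⟩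

theorem exists_forall_le (hw : ZPeriodic w) (hc : Continuous w) : ∃ y₁, ∀ y, w y₁ ≤ w y := by
  obtain ⟨_, ⟨y₁, rfl⟩, hy₁⟩ := (hw.isCompact_range hc).exists_isLeast (Set.range_nonempty w)
  exact ⟨y₁, fun y => hy₁ ⟨y, rfl⟩⟩

end ZPeriodic

theorem penalized_solution_bounds_general
    (n : ℕ) (δ : ℝ) (hδ : 0 < δ)
    (A : EuclideanSpace ℝ (Fin n) → Matrix (Fin n) (Fin n) ℝ)
    (hApsd : ∀ y, (A y).PosSemidef)
    (H : EuclideanSpace ℝ (Fin n) → EuclideanSpace ℝ (Fin n) → ℝ)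
    (α β α' β' : ℝ)
    (hgrowth : ∀ q y, α * ‖q‖ ^ 2 - α' ≤ H q y ∧ H q y ≤ β * ‖q‖ ^ 2 + β')
    (p : EuclideanSpace ℝ (Fin n))
    (w : EuclideanSpace ℝ (Fin n) → ℝ)
    (hw : ContDiff ℝ 2 w) (hwper : ZPeriodic w)
    (heq : ∀ y, -((A y) * hessM w y).trace + H (gradient w y + p) y + δ * w y = 0) :
    ∀ y, -β * ‖p‖ ^ 2 - β' ≤ δ * w y ∧ δ * w y ≤ -α * ‖p‖ ^ 2 + α' := by
  obtain ⟨y₀, hmax⟩ := hwper.exists_forall_ge hw.continuous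
  obtain ⟨y₁, hmin⟩ := hwper.exists_forall_le hw.continuous
  have hmax' : IsLocalMax w y₀ := .of_forall hmax
  have hmin' : IsLocalMin w y₁ := .of_forall hmin
  have hupper : δ * w y₀ ≤ -α * ‖p‖ ^ 2 + α' := by
    have h := heq y₀
    rw [IsLocalExtr.gradient_eq_zero hmax'.isExtr, zero_add] at h
    linarith [(hgrowth p y₀).1, hmax'.trace_mul_hessM_nonpos (hApsd y₀) hw]
  have hlower : -β * ‖p‖ ^ 2 - β' ≤ δ * w y₁ := by
    have h := heq y₁
    rw [IsLocalExtr.gradient_eq_zero hmin'.isExtr, zero_add] at h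
    linarith [(hgrowth p y₁).2, hmin'.trace_mul_hessM_nonneg (hApsd y₁) hw]
  exact fun y => ⟨hlower.trans (mul_le_mul_of_nonneg_left (hmin y) hδ.le),
    (mul_le_mul_of_nonneg_left (hmax y) hδ.le).trans hupper⟩

/-- Uniform bounds on `δ w` for a classical periodic solution of the
δ-penalized cell equation. -/
theorem penalized_solution_bounds
    (n : ℕ) (hn : 1 ≤ n) (δ : ℝ) (hδ : 0 < δ)
    (A : EuclideanSpace ℝ (Fin n) → Matrix (Fin n) (Fin n) ℝ)
    (hAsymm : ∀ y, (A y).IsSymm) (hApsd : ∀ y, (A y).PosSemidef)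
    (H : EuclideanSpace ℝ (Fin n) → EuclideanSpace ℝ (Fin n) → ℝ)
    (α β α' β' : ℝ) (hα : 0 < α) (hβ : 0 < β) (hα' : 0 ≤ α') (hβ' : 0 ≤ β')
    (hgrowth : ∀ q y, α * ‖q‖ ^ 2 - α' ≤ H q y ∧ H q y ≤ β * ‖q‖ ^ 2 + β')
    (p : EuclideanSpace ℝ (Fin n))
    (w : EuclideanSpace ℝ (Fin n) → ℝ)
    (hw : ContDiff ℝ 2 w) (hwper : ZPeriodic w)
    (heq : ∀ y, -((A y) * hessM w y).trace + H (gradient w y + p) y + δ * w y = 0) :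
    ∀ y, -β * ‖p‖ ^ 2 - β' ≤ δ * w y ∧ δ * w y ≤ -α * ‖p‖ ^ 2 + α' :=
  penalized_solution_bounds_general n δ hδ A hApsd H α β α' β' hgrowth p w hw hwper heq
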